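/- arXiv:1908.07128 — 4 statements merged into one kernel-verified Lean document; each statement's English description precedes it below -/
import Mathlib

section
/- With d = 2cos(π/7), the 3×3 real matrix S₃ with rows (1, d, d² − 1), (d, −(d² − 1), 1), (d² − 1, 1, −d) is symmetric and satisfies S₃ · S₃ᵀ = (1 + d² + (d² − 1)²) · I₃. -/
/-!
`d = 2 cos(π/7)` is a root of `x³ - x² - 2x + 1`: with `θ = π/7` one has `cos 4θ = -cos 3θ`,
which in terms of `x = 2 cos θ` reads `(x + 2)(x³ - x² - 2x + 1) = 0`, and `x + 2 > 0`.
The rows of `S₃` are permutations of `±1, ±d, ±(d² - 1)`, so the diagonal entries of `S₃ S₃ᵀ`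
agree, and every off-diagonal entry is `±(d³ - d² - 2d + 1) = 0`.
-/

/-- `d = 2 cos(π/7)`. -/
noncomputable def d : ℝ := 2 * Real.cos (Real.pi / 7)

/-- The 3×3 real matrix with rows `(1, d, d²−1)`, `(d, −(d²−1), 1)`, `(d²−1, 1, −d)`. -/
noncomputable def S₃ : Matrix (Fin 3) (Fin 3) ℝ :=
  !![1, d, d ^ 2 - 1;
     d, -(d ^ 2 - 1), 1;
     d ^ 2 - 1, 1, -d]

theorem two_mul_cos_pi_div_seven_cubic :
    (2 * Real.cos (Real.pi / 7)) ^ 3 - (2 * Real.cos (Real.pi / 7)) ^ 2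
      - 2 * (2 * Real.cos (Real.pi / 7)) + 1 = 0 := by
  have hpos : 0 < Real.cos (Real.pi / 7) :=
    Real.cos_pos_of_mem_Ioo ⟨by linarith [Real.pi_pos], by linarith [Real.pi_pos]⟩
  set θ := Real.pi / 7
  have hcos : Real.cos (4 * θ) = -Real.cos (3 * θ) := by
    rw [show 4 * θ = Real.pi - 3 * θ by ring, Real.cos_pi_sub]
  rw [show 4 * θ = 2 * (2 * θ) by ring, Real.cos_two_mul, Real.cos_two_mul,
    Real.cos_three_mul] at hcos
  have hquartic : (2 * Real.cos θ + 2) * ((2 * Real.cos θ) ^ 3 - (2 * Real.cos θ) ^ 2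
      - 2 * (2 * Real.cos θ) + 1) = 0 := by
    linear_combination 2 * hcos
  exact (mul_eq_zero.mp hquartic).resolve_left (by positivity)

section HeptagonMatrix

variable {R : Type*} [CommRing R]

def heptagonMatrix (x : R) : Matrix (Fin 3) (Fin 3) R :=
  !![1, x, x ^ 2 - 1;
     x, -(x ^ 2 - 1), 1;
     x ^ 2 - 1, 1, -x]

theorem heptagonMatrix_isSymm (x : R) : (heptagonMatrix x).IsSymm :=
  Matrix.IsSymm.ext fun i j => by fin_cases i <;> fin_cases j <;> rfl

theorem heptagonMatrix_mul_transpose {x : R} (hx : x ^ 3 - x ^ 2 - 2 * x + 1 = 0) :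
    heptagonMatrix x * (heptagonMatrix x).transpose
      = (1 + x ^ 2 + (x ^ 2 - 1) ^ 2) • (1 : Matrix (Fin 3) (Fin 3) R) := by
  rw [(heptagonMatrix_isSymm x).eq, heptagonMatrix, Matrix.mul_fin_three, Matrix.one_fin_three,
    Matrix.smul_of]
  ext i j
  fin_cases i <;> fin_cases j <;>
    simp only [Matrix.of_apply, Matrix.smul_cons, Matrix.smul_empty, smul_eq_mul] <;> grind

end HeptagonMatrix

theorem S₃_symm_orthogonal :
    S₃.IsSymm ∧
    S₃ * S₃.transpose
      = (1 + d ^ 2 + (d ^ 2 - 1) ^ 2) • (1 : Matrix (Fin 3) (Fin 3) ℝ) := by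
  rw [show S₃ = heptagonMatrix d from rfl]
  exact ⟨heptagonMatrix_isSymm d, heptagonMatrix_mul_transpose two_mul_cos_pi_div_seven_cubic⟩
end

section
/- The 6×6 real matrix S = [[1,1],[1,−1]] ⊗ S₃ (Kronecker product) is symmetric and satisfies S · Sᵀ = D² · I₆, where D² = 2(1 + d² + (d² − 1)²). -/
/-!
`d = 2 cos(π/7)` is a root of `x³ - x² - 2x + 1`: at `θ = π/7` the identity `cos 4θ = -cos 3θ`,
written in `c = cos θ`, reads `(c + 1)(8c³ - 4c² - 4c + 1) = 0`, and `c + 1 > 0`. This cubic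
relation is exactly what makes the rows of `S₃` pairwise orthogonal (each off-diagonal entry of
`S₃ S₃ᵀ` is `±(d³ - d² - 2d + 1)`), while all three rows have squared length
`1 + d² + (d² - 1)²`. Since `(A ⊗ B)(A ⊗ B)ᵀ = AAᵀ ⊗ BBᵀ` and the Hadamard matrix
`H = [[1,1],[1,-1]]` has `HHᵀ = 2I`, the claim follows; symmetry of `S` is that of `H` and `S₃`.
-/

open Kronecker

/-- The 6×6 real matrix `S = [[1,1],[1,−1]] ⊗ S₃` (Kronecker product). -/
noncomputable def S : Matrix (Fin 2 × Fin 3) (Fin 2 × Fin 3) ℝ :=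
  (!![1, 1; 1, -1] : Matrix (Fin 2) (Fin 2) ℝ) ⊗ₖ S₃

open Real in
theorem two_cos_pi_div_seven_cubic :
    (2 * cos (π / 7)) ^ 3 - (2 * cos (π / 7)) ^ 2 - 2 * (2 * cos (π / 7)) + 1 = 0 := by
  set c := cos (π / 7)
  have h : cos (4 * (π / 7)) = -cos (3 * (π / 7)) := by
    rw [← cos_pi_sub]
    ring_nf
  have hc : 0 < c + 1 := by
    have : 0 < c := cos_pos_of_mem_Ioo ⟨by linarith [pi_pos], by linarith [pi_pos]⟩
    linarith
  rw [show 4 * (π / 7) = 2 * (2 * (π / 7)) by ring, cos_two_mul, cos_two_mul, cos_three_mul] at h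
  refine (mul_eq_zero.mp ?_).resolve_left hc.ne'
  linear_combination h

namespace Matrix

variable {l m n p R : Type*}

theorem IsSymm.kronecker [Mul R] {A : Matrix m m R} {B : Matrix n n R} (hA : A.IsSymm)
    (hB : B.IsSymm) : (A ⊗ₖ B).IsSymm := by
  rw [IsSymm, ← kroneckerMap_transpose, hA.eq, hB.eq]

theorem kronecker_mul_transpose_self [Fintype m] [Fintype p] [CommSemiring R] [DecidableEq l]
    [DecidableEq n] {A : Matrix l m R} {B : Matrix n p R} {a b : R} (hA : A * Aᵀ = a • 1)
    (hB : B * Bᵀ = b • 1) : A ⊗ₖ B * (A ⊗ₖ B)ᵀ = (a * b) • 1 := by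
  rw [← kroneckerMap_transpose, ← mul_kronecker_mul, hA, hB, smul_kronecker, kronecker_smul,
    one_kronecker_one, smul_smul]

end Matrix

open Matrix

theorem hadamard_two_isSymm {R : Type*} [Ring R] : (!![(1 : R), 1; 1, -1]).IsSymm :=
  IsSymm.ext fun i j => by fin_cases i <;> fin_cases j <;> rfl

theorem hadamard_two_mul_transpose {R : Type*} [CommRing R] :
    !![(1 : R), 1; 1, -1] * !![(1 : R), 1; 1, -1]ᵀ = (2 : R) • 1 := by
  ext i j
  fin_cases i <;> fin_cases j <;> simp [mul_apply, Fin.sum_univ_two, one_add_one_eq_two]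

theorem S₃_isSymm : S₃.IsSymm :=
  IsSymm.ext fun i j => by fin_cases i <;> fin_cases j <;> rfl

theorem S₃_mul_transpose : S₃ * S₃ᵀ = (1 + d ^ 2 + (d ^ 2 - 1) ^ 2) • 1 := by
  have hd : d ^ 3 - d ^ 2 - 2 * d + 1 = 0 := two_cos_pi_div_seven_cubic
  ext i j
  fin_cases i <;> fin_cases j <;> simp [S₃, mul_apply, Fin.sum_univ_three] <;> grind

theorem S_symm_orthogonal :
    S.IsSymm ∧
    S * S.transpose
      = (2 * (1 + d ^ 2 + (d ^ 2 - 1) ^ 2)) •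
          (1 : Matrix (Fin 2 × Fin 3) (Fin 2 × Fin 3) ℝ) :=
  ⟨hadamard_two_isSymm.kronecker S₃_isSymm,
    kronecker_mul_transpose_self hadamard_two_mul_transpose S₃_mul_transpose⟩
end

section
/- For the 6×6 real matrix S = [[1,1],[1,−1]] ⊗ S₃ with D² = 2(1 + d² + (d² − 1)²), the Verlinde numbers N_{ij}^k := (1/D²) · Σ_{a=0}^{5} S_{ia} S_{ja} S_{ka} / S_{0a} are nonnegative integers for all i, j, k ∈ {0,…,5}. -/
open Kronecker

/-- `D² = 2(1 + d² + (d² − 1)²)`. -/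
noncomputable def Dsq : ℝ := 2 * (1 + d ^ 2 + (d ^ 2 - 1) ^ 2)

/-- The Verlinde numbers `N_{ij}^k = (1/D²) Σ_a S_{ia} S_{ja} S_{ka} / S_{0a}`
(the first row of `S` is the row indexed by `(0,0)`). -/
noncomputable def verlinde (i j k : Fin 2 × Fin 3) : ℝ :=
  (1 / Dsq) * ∑ a : Fin 2 × Fin 3,
    S i a * S j a * S k a / S ((0 : Fin 2), (0 : Fin 3)) a

/-!
Verlinde numbers are multiplicative under Kronecker products, so those of `S` are products of
those of `H₂ = [[1,1],[1,-1]]` (normalized by `2`) and of `S₃` (normalized by `D²/2`). Each factor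
`A` satisfies `A Aᵀ = D I` with its normalization `D`, and its columns, divided by their first
entry, are characters of a fusion ring with nonnegative integer structure constants `n`:
`A_{ia} A_{ja} = A_{0a} Σ_l n_{ij}^l A_{la}`. Orthogonality then makes the Verlinde formula return
exactly `n_{ij}^k`. For `H₂` the ring is `ℤ[ℤ/2]`. For `S₃` each column is proportional to
`(1, x, x² - 1)` with `x` a root of `x³ - x² - 2x + 1`, the minimal polynomial of `d`.
-/

open Matrix

noncomputable def verlindeCoeff {ι : Type*} [Fintype ι] (S : Matrix ι ι ℝ) (i₀ : ι) (D : ℝ)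
    (i j k : ι) : ℝ :=
  (1 / D) * ∑ a, S i a * S j a * S k a / S i₀ a

theorem verlindeCoeff_kronecker {ι κ : Type*} [Fintype ι] [Fintype κ]
    (A : Matrix ι ι ℝ) (B : Matrix κ κ ℝ) (i₀ : ι) (j₀ : κ) (D E : ℝ)
    (i j k : ι) (i' j' k' : κ) :
    verlindeCoeff (A ⊗ₖ B) (i₀, j₀) (D * E) (i, i') (j, j') (k, k') =
      verlindeCoeff A i₀ D i j k * verlindeCoeff B j₀ E i' j' k' := by
  simp only [verlindeCoeff, kroneckerMap_apply, Fintype.sum_prod_type]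
  rw [mul_mul_mul_comm, Finset.sum_mul_sum, one_div_mul_one_div]
  congr 1
  refine Finset.sum_congr rfl fun a _ => Finset.sum_congr rfl fun b _ => ?_
  ring

theorem verlindeCoeff_eq_of_fusion {ι : Type*} [Fintype ι] [DecidableEq ι]
    {S : Matrix ι ι ℝ} {D : ℝ} {i₀ : ι} (N : ι → ι → ι → ℝ)
    (hS : S * Sᵀ = D • 1) (hD : D ≠ 0) (h₀ : ∀ a, S i₀ a ≠ 0)
    (hN : ∀ i j a, S i a * S j a = S i₀ a * ∑ l, N i j l * S l a) (i j k : ι) :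
    verlindeCoeff S i₀ D i j k = N i j k := by
  have horth : ∀ l, ∑ a, S l a * S k a = D * if l = k then 1 else 0 := fun l => by
    simpa [mul_apply, one_apply] using congr_fun₂ hS l k
  calc verlindeCoeff S i₀ D i j k
      = (1 / D) * ∑ a, (∑ l, N i j l * S l a) * S k a := by
        unfold verlindeCoeff
        congr 1
        refine Finset.sum_congr rfl fun a _ => ?_
        rw [hN, mul_div_right_comm, mul_div_cancel_left₀ _ (h₀ a)]
    _ = (1 / D) * ∑ l, N i j l * (D * if l = k then 1 else 0) := by
        simp_rw [Finset.sum_mul, mul_assoc]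
        rw [Finset.sum_comm]
        simp_rw [← Finset.mul_sum, horth]
    _ = N i j k := by
        simp [field]

theorem one_lt_d : 1 < d := by
  have h := Real.cos_lt_cos_of_nonneg_of_le_pi (x := Real.pi / 7) (y := Real.pi / 3)
    (by positivity) (by linarith [Real.pi_pos]) (by linarith [Real.pi_pos])
  rw [Real.cos_pi_div_three] at h
  unfold d
  linarith

theorem d_cubic : d ^ 3 - d ^ 2 - 2 * d + 1 = 0 := by
  have h : Real.cos (4 * (Real.pi / 7)) = -Real.cos (3 * (Real.pi / 7)) := by
    rw [← Real.cos_pi_sub]; ring_nf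
  rw [show 4 * (Real.pi / 7) = 2 * (2 * (Real.pi / 7)) by ring, Real.cos_two_mul,
    Real.cos_two_mul, Real.cos_three_mul] at h
  have hfac : (d + 2) * (d ^ 3 - d ^ 2 - 2 * d + 1) = 0 := by
    unfold d; linear_combination 2 * h
  exact (mul_eq_zero.mp hfac).resolve_left (by linarith [one_lt_d])

def H₂ : Matrix (Fin 2) (Fin 2) ℝ := !![1, 1; 1, -1]

def N₂ (i j k : Fin 2) : ℕ := if i + j = k then 1 else 0

theorem H₂_mul_transpose : H₂ * H₂ᵀ = (2 : ℝ) • 1 := by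
  ext i j
  fin_cases i <;> fin_cases j <;> simp [H₂, mul_apply] <;> norm_num

theorem H₂_fusion (i j a : Fin 2) : H₂ i a * H₂ j a = H₂ 0 a * ∑ l, (N₂ i j l : ℝ) * H₂ l a := by
  fin_cases i <;> fin_cases j <;> fin_cases a <;> simp [H₂, N₂]

theorem verlindeCoeff_H₂ (i j k : Fin 2) : verlindeCoeff H₂ 0 2 i j k = N₂ i j k :=
  verlindeCoeff_eq_of_fusion (fun i j k => N₂ i j k) H₂_mul_transpose two_ne_zero
    (fun a => by fin_cases a <;> simp [H₂]) H₂_fusion i j k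

noncomputable def Dsq₃ : ℝ := 1 + d ^ 2 + (d ^ 2 - 1) ^ 2

-- Structure constants in the basis `1, X, Y` with `X² = 1 + Y`, `XY = X + Y`, `Y² = 1 + X + Y`.
def N₃ : Fin 3 → Fin 3 → Fin 3 → ℕ :=
  ![![![1, 0, 0], ![0, 1, 0], ![0, 0, 1]],
    ![![0, 1, 0], ![1, 0, 1], ![0, 1, 1]],
    ![![0, 0, 1], ![0, 1, 1], ![1, 1, 1]]]

theorem S₃_mul_transpose_s6 : S₃ * S₃ᵀ = Dsq₃ • 1 := by
  have h := d_cubic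
  ext i j
  fin_cases i <;> fin_cases j <;> simp [S₃, Dsq₃, mul_apply, Fin.sum_univ_three] <;> linarith

theorem S₃_fusion (i j a : Fin 3) : S₃ i a * S₃ j a = S₃ 0 a * ∑ l, (N₃ i j l : ℝ) * S₃ l a := by
  have h := d_cubic
  have hd : d * (d ^ 3 - d ^ 2 - 2 * d + 1) = 0 := by rw [h, mul_zero]
  -- Both sides have degree at most 4 in `d`, so they differ by `(α + β d)` times the cubic.
  fin_cases i <;> fin_cases j <;> fin_cases a <;> simp [S₃, N₃, Fin.sum_univ_three] <;> linarith

theorem S₃_zero_ne_zero (a : Fin 3) : S₃ 0 a ≠ 0 := by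
  have := one_lt_d
  fin_cases a <;> simp [S₃] <;> nlinarith

theorem verlindeCoeff_S₃ (i j k : Fin 3) : verlindeCoeff S₃ 0 Dsq₃ i j k = N₃ i j k :=
  verlindeCoeff_eq_of_fusion (fun i j k => N₃ i j k) S₃_mul_transpose_s6 (by unfold Dsq₃; positivity)
    S₃_zero_ne_zero S₃_fusion i j k

theorem verlinde_eq : verlinde = verlindeCoeff (H₂ ⊗ₖ S₃) (0, 0) (2 * Dsq₃) := rfl

theorem verlinde_nonneg_integers :
    ∀ i j k : Fin 2 × Fin 3, ∃ n : ℕ, verlinde i j k = (n : ℝ) := by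
  rintro ⟨i, i'⟩ ⟨j, j'⟩ ⟨k, k'⟩
  refine ⟨N₂ i j k * N₃ i' j' k', ?_⟩
  rw [verlinde_eq, verlindeCoeff_kronecker, verlindeCoeff_H₂, verlindeCoeff_S₃, Nat.cast_mul]
end

section
/- With α = e^{iπ/9}, the three complex numbers r₁ = −α − α² + α⁵, r₂ = α + α² − α⁴, r₃ = α⁴ − α⁵ are pairwise distinct real numbers and each is a root of the polynomial x³ − 3x + 1. -/
/-!
With `α = e^{iπ/9}` one has `α ^ 6 - α ^ 3 + 1 = 0`, since `α ^ 3 + α⁻³ = 2 cos (π/3) = 1`.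
This relation rewrites `r₂, r₃, r₁` as `α ^ k + α⁻ᵏ = 2 cos (kπ/9)` for `k = 2, 4, 8`, so they
are real. The triple-angle formula turns `x³ - 3x + 1 = 0` at `x = 2 cos θ` into
`cos 3θ = -1/2`, which holds for `3θ = 2π/3, 4π/3, 8π/3`; and the three angles are distinct
points of `[0, π]`, where `cos` is injective.
-/

/-- `α = e^{iπ/9}`. -/
noncomputable def α : ℂ := Complex.exp (Real.pi * Complex.I / 9)

noncomputable def r₁ : ℂ := -α - α ^ 2 + α ^ 5
noncomputable def r₂ : ℂ := α + α ^ 2 - α ^ 4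
noncomputable def r₃ : ℂ := α ^ 4 - α ^ 5

open Real

lemma exp_mul_I_add_inv (θ : ℝ) :
    Complex.exp (θ * Complex.I) + (Complex.exp (θ * Complex.I))⁻¹ = ((2 * cos θ : ℝ) : ℂ) := by
  rw [← Complex.exp_neg, ← neg_mul, ← Complex.two_cos]
  push_cast
  rfl

lemma alpha_ne_zero : α ≠ 0 := Complex.exp_ne_zero _

lemma alpha_pow_add_inv_pow (k : ℕ) : α ^ k + (α ^ k)⁻¹ = ((2 * cos (k * π / 9) : ℝ) : ℂ) := by
  rw [α, ← Complex.exp_nat_mul, ← exp_mul_I_add_inv]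
  push_cast
  ring_nf

lemma alpha_pow_six_sub_pow_three_add_one : α ^ 6 - α ^ 3 + 1 = 0 := by
  have h := alpha_pow_add_inv_pow 3
  rw [show ((3 : ℕ) : ℝ) * π / 9 = π / 3 by push_cast; ring, cos_pi_div_three] at h
  norm_num at h
  field_simp [alpha_ne_zero] at h
  linear_combination h

lemma r₁_eq_two_cos : r₁ = ((2 * cos (8 * π / 9) : ℝ) : ℂ) := by
  have h := alpha_pow_add_inv_pow 8
  simp only [Nat.cast_ofNat] at h
  rw [r₁, ← h]
  field_simp [alpha_ne_zero]
  linear_combination (-α ^ 10 - α ^ 3 - 1) * alpha_pow_six_sub_pow_three_add_one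

lemma r₂_eq_two_cos : r₂ = ((2 * cos (2 * π / 9) : ℝ) : ℂ) := by
  have h := alpha_pow_add_inv_pow 2
  simp only [Nat.cast_ofNat] at h
  rw [r₂, ← h]
  field_simp [alpha_ne_zero]
  linear_combination -alpha_pow_six_sub_pow_three_add_one

lemma r₃_eq_two_cos : r₃ = ((2 * cos (4 * π / 9) : ℝ) : ℂ) := by
  have h := alpha_pow_add_inv_pow 4
  simp only [Nat.cast_ofNat] at h
  rw [r₃, ← h]
  field_simp [alpha_ne_zero]
  linear_combination (-α ^ 3 - 1) * alpha_pow_six_sub_pow_three_add_one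

lemma two_cos_cube_sub_add_one {θ : ℝ} (h : cos (3 * θ) = -1 / 2) :
    (2 * cos θ) ^ 3 - 3 * (2 * cos θ) + 1 = 0 := by
  rw [cos_three_mul] at h
  linear_combination 2 * h

lemma cos_two_pi_div_three : cos (2 * π / 3) = -1 / 2 := by
  rw [show 2 * π / 3 = π - π / 3 by ring, cos_pi_sub, cos_pi_div_three]
  norm_num

lemma cos_four_pi_div_three : cos (4 * π / 3) = -1 / 2 := by
  rw [show 4 * π / 3 = π / 3 + π by ring, cos_add_pi, cos_pi_div_three]
  norm_num

lemma cos_eight_pi_div_three : cos (8 * π / 3) = -1 / 2 := by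
  rw [show 8 * π / 3 = 2 * π / 3 + 2 * π by ring, cos_add_two_pi, cos_two_pi_div_three]

lemma ofReal_two_cos_ne_of_mem_Icc {x y : ℝ} (hx : x ∈ Set.Icc 0 π) (hy : y ∈ Set.Icc 0 π)
    (hxy : x ≠ y) : ((2 * cos x : ℝ) : ℂ) ≠ ((2 * cos y : ℝ) : ℂ) := by
  intro h
  exact hxy (injOn_cos hx hy (mul_right_injective₀ two_ne_zero (by exact_mod_cast h)))

theorem r_distinct_real_roots :
    (r₁ ≠ r₂ ∧ r₁ ≠ r₃ ∧ r₂ ≠ r₃) ∧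
    (r₁.im = 0 ∧ r₂.im = 0 ∧ r₃.im = 0) ∧
    (r₁ ^ 3 - 3 * r₁ + 1 = 0 ∧ r₂ ^ 3 - 3 * r₂ + 1 = 0 ∧ r₃ ^ 3 - 3 * r₃ + 1 = 0) := by
  rw [r₁_eq_two_cos, r₂_eq_two_cos, r₃_eq_two_cos]
  have mem_Icc {k : ℝ} (h₀ : 0 ≤ k) (h₉ : k ≤ 9) : k * π / 9 ∈ Set.Icc 0 π :=
    ⟨by positivity, by rw [div_le_iff₀ (by norm_num)]; nlinarith [pi_pos]⟩
  have h₂ := mem_Icc (k := 2) (by norm_num) (by norm_num)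
  have h₄ := mem_Icc (k := 4) (by norm_num) (by norm_num)
  have h₈ := mem_Icc (k := 8) (by norm_num) (by norm_num)
  have root {θ : ℝ} (h : cos (3 * θ) = -1 / 2) :
      ((2 * cos θ : ℝ) : ℂ) ^ 3 - 3 * ((2 * cos θ : ℝ) : ℂ) + 1 = 0 := by
    exact_mod_cast two_cos_cube_sub_add_one h
  refine ⟨⟨?_, ?_, ?_⟩, ⟨Complex.ofReal_im _, Complex.ofReal_im _, Complex.ofReal_im _⟩,
    ⟨root ?_, root ?_, root ?_⟩⟩
  · exact ofReal_two_cos_ne_of_mem_Icc h₈ h₂ (by intro h; linarith [pi_pos])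
  · exact ofReal_two_cos_ne_of_mem_Icc h₈ h₄ (by intro h; linarith [pi_pos])
  · exact ofReal_two_cos_ne_of_mem_Icc h₂ h₄ (by intro h; linarith [pi_pos])
  · rw [← cos_eight_pi_div_three]; ring_nf
  · rw [← cos_two_pi_div_three]; ring_nf
  · rw [← cos_four_pi_div_three]; ring_nf
end
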